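/- Let 𝔩 : 𝔗 → [0,∞) be positively homogeneous and superadditive on a convex cone 𝔗, and let {W_n} be subsets of 𝔩^{-1}(1) that are uniformly bounded, with W_{n+1} ⊆ cone(W_n), and suppose there is a sequence δ_n ↓ 0 such that for any finite set of pairwise distinct v_0, …, v_k ∈ W_n (k + 1 points) one has 𝔩(v_0 + ⋯ + v_k) ≤ k + 1 + δ_n. Then the closed convex hull of W_n is disjoint from 𝔩^{-1}([1 + 2δ_n, ∞)). -/

import Mathlib

/-! If `x = ∑ wₐ • a` is a convex combination of `k + 1` distinct points of `W n`, the
complementary combination `∑ (1 - wₐ) • a` lies in the cone and has `l`-value at least `k`; as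
the two add up to `∑ a`, whose `l`-value is at most `k + 1 + δ n`, superadditivity gives
`l x ≤ 1 + δ n` on the convex hull. The bound passes to the closure because `l` is concave and
nonnegative on `T`: for `x` in the closure and `y` in the relative interior of the hull, the
points `(1 - t) • x + t • y` lie in the hull, so `(1 - t) * l x ≤ 1 + δ n` for all `t ∈ (0, 1)`. -/

open Set Filter Topology

theorem Convex.openSegment_closure_intrinsicInterior_subset_intrinsicInterior
    {V : Type*} [NormedAddCommGroup V] [NormedSpace ℝ V] [FiniteDimensional ℝ V] {s : Set V}
    (hs : Convex ℝ s) {x y : V} (hx : x ∈ closure s) (hy : y ∈ intrinsicInterior ℝ s) :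
    openSegment ℝ x y ⊆ intrinsicInterior ℝ s := by
  obtain ⟨p, hp, rfl⟩ := hy
  rw [← intrinsicClosure_eq_closure ℝ] at hx
  obtain ⟨q, hq, rfl⟩ := hx
  -- Identify the affine span with its direction, where the intrinsic interior is the interior.
  have : Nonempty (affineSpan ℝ s) := ⟨p⟩
  let φ := AffineIsometryEquiv.constVSub ℝ p
  let e := φ.symm.toHomeomorph
  let g := (affineSpan ℝ s).subtype.comp φ.symm.toAffineEquiv.toAffineMap
  have hg : ⇑g = (↑) ∘ e := rfl
  have hconv : Convex ℝ (e ⁻¹' ((↑) ⁻¹' s)) := hs.affine_preimage g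
  have hq' : φ q ∈ closure (e ⁻¹' ((↑) ⁻¹' s)) := by
    rw [← e.preimage_closure]; simpa [e] using hq
  have hp' : φ p ∈ interior (e ⁻¹' ((↑) ⁻¹' s)) := by
    rw [← e.preimage_interior]; simpa [e] using hp
  have hseg := hconv.openSegment_closure_interior_subset_interior hq' hp'
  calc openSegment ℝ (q : V) p = g '' openSegment ℝ (φ q) (φ p) := by
        rw [image_openSegment]; simp [g]
    _ ⊆ g '' interior (e ⁻¹' ((↑) ⁻¹' s)) := image_mono hseg
    _ = intrinsicInterior ℝ s := by
        rw [hg, image_comp, ← e.preimage_interior, e.image_preimage]; rfl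

theorem ConcaveOn.le_of_mem_closure {V : Type*} [NormedAddCommGroup V] [NormedSpace ℝ V]
    [FiniteDimensional ℝ V] {T C : Set V} {f : V → ℝ} (hf : ConcaveOn ℝ T f)
    (hC : Convex ℝ C) (hCT : C ⊆ T) (hf₀ : ∀ z ∈ C, 0 ≤ f z) {M : ℝ} (hM : ∀ z ∈ C, f z ≤ M)
    {x : V} (hx : x ∈ closure C) (hxT : x ∈ T) : f x ≤ M := by
  obtain ⟨y, hy⟩ := (closure_nonempty_iff.mp ⟨x, hx⟩).intrinsicInterior hC
  have hyC : y ∈ C := intrinsicInterior_subset hy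
  have hbound : ∀ t ∈ Ioo (0 : ℝ) 1, (1 - t) * f x ≤ M := by
    rintro t ⟨ht₀, ht₁⟩
    have hz : (1 - t) • x + t • y ∈ C :=
      intrinsicInterior_subset <|
        hC.openSegment_closure_intrinsicInterior_subset_intrinsicInterior hx hy
          ⟨1 - t, t, by linarith, ht₀, by ring, rfl⟩
    calc (1 - t) * f x ≤ (1 - t) • f x + t • f y := by
          simpa using mul_nonneg ht₀.le (hf₀ y hyC)
      _ ≤ f ((1 - t) • x + t • y) := hf.2 hxT (hCT hyC) (by linarith) ht₀.le (by ring)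
      _ ≤ M := hM _ hz
  have hlim : Tendsto (fun t : ℝ => (1 - t) * f x) (𝓝[>] 0) (𝓝 (f x)) :=
    tendsto_nhdsWithin_of_tendsto_nhds <|
      ((continuous_const.sub continuous_id).mul continuous_const).tendsto' 0 _ (by simp)
  exact le_of_tendsto hlim <| mem_of_superset (Ioo_mem_nhdsGT one_pos) hbound

theorem Finset.exists_injective_fin_sum_eq {M : Type*} [AddCommMonoid M] (t : Finset M) {n : ℕ}
    (h : t.card = n) :
    ∃ v : Fin n → M, Function.Injective v ∧ (∀ i, v i ∈ t) ∧ ∑ i, v i = ∑ a ∈ t, a := by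
  let e := t.equivFinOfCardEq h
  refine ⟨fun i => e.symm i, Subtype.coe_injective.comp e.symm.injective,
    fun i => (e.symm i).2, ?_⟩
  rw [Equiv.sum_comp e.symm (fun a : t => (a : M))]
  exact Finset.sum_coe_sort t id

section SuperadditiveOnCone

variable {V : Type*} [AddCommGroup V] [Module ℝ V] {T : Set V} {l : V → ℝ}

theorem add_mem_of_convex_of_smul_mem (hconv : Convex ℝ T)
    (hcone : ∀ c : ℝ, 0 ≤ c → ∀ v ∈ T, c • v ∈ T) {v w : V} (hv : v ∈ T) (hw : w ∈ T) :
    v + w ∈ T := by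
  have := hcone 2 zero_le_two _ (hconv hv hw (by norm_num) (by norm_num) (add_halves 1))
  rwa [smul_add, smul_smul, smul_smul, mul_one_div_cancel two_ne_zero, one_smul, one_smul]
    at this

theorem le_map_sum_of_superadditive (hconv : Convex ℝ T)
    (hcone : ∀ c : ℝ, 0 ≤ c → ∀ v ∈ T, c • v ∈ T)
    (hsuper : ∀ v ∈ T, ∀ w ∈ T, l v + l w ≤ l (v + w)) {ι : Type*} {s : Finset ι} {f : ι → V}
    (hs : s.Nonempty) (hf : ∀ i ∈ s, f i ∈ T) : ∑ i ∈ s, l (f i) ≤ l (∑ i ∈ s, f i) := by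
  have := Finset.le_sum_nonempty_of_subadditive_on_pred (-l) (· ∈ T)
    (fun v w hv hw => by simp only [Pi.neg_apply]; linarith [hsuper v hv w hw])
    (fun v w => add_mem_of_convex_of_smul_mem hconv hcone) f s hs hf
  simpa [Finset.sum_neg_distrib] using this

theorem concaveOn_of_superadditive_of_homogeneous (hconv : Convex ℝ T)
    (hcone : ∀ c : ℝ, 0 ≤ c → ∀ v ∈ T, c • v ∈ T)
    (hhom : ∀ c : ℝ, 0 ≤ c → ∀ v ∈ T, l (c • v) = c * l v)
    (hsuper : ∀ v ∈ T, ∀ w ∈ T, l v + l w ≤ l (v + w)) : ConcaveOn ℝ T l :=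
  ⟨hconv, fun x hx y hy a b ha hb _ => by
    simpa only [smul_eq_mul, hhom a ha x hx, hhom b hb y hy] using
      hsuper _ (hcone a ha x hx) _ (hcone b hb y hy)⟩

theorem le_one_add_of_mem_convexHull (hconv : Convex ℝ T)
    (hcone : ∀ c : ℝ, 0 ≤ c → ∀ v ∈ T, c • v ∈ T)
    (hhom : ∀ c : ℝ, 0 ≤ c → ∀ v ∈ T, l (c • v) = c * l v)
    (hsuper : ∀ v ∈ T, ∀ w ∈ T, l v + l w ≤ l (v + w)) {W : Set V}
    (hW : W ⊆ {v ∈ T | l v = 1}) {δ : ℝ}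
    (hsum : ∀ t : Finset V, ↑t ⊆ W → t.Nonempty → l (∑ a ∈ t, a) ≤ t.card + δ) {x : V}
    (hx : x ∈ convexHull ℝ W) : l x ≤ 1 + δ := by
  rw [convexHull_eq_union_convexHull_finite_subsets, mem_iUnion₂] at hx
  obtain ⟨t, htW, hx⟩ := hx
  obtain ⟨w, hw₀, hw₁, rfl⟩ := Finset.mem_convexHull'.mp hx
  have ht : t.Nonempty := Finset.nonempty_of_sum_ne_zero (hw₁ ▸ one_ne_zero)
  have hT : ∀ a ∈ t, a ∈ T := fun a ha => (hW (htW ha)).1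
  have hw₁' : ∀ a ∈ t, 0 ≤ 1 - w a := fun a ha => sub_nonneg.mpr <| hw₁ ▸ t.single_le_sum hw₀ ha
  have hrest : (t.card : ℝ) - 1 ≤ l (∑ a ∈ t, (1 - w a) • a) := calc
    (t.card : ℝ) - 1 = ∑ a ∈ t, l ((1 - w a) • a) := by
      rw [Finset.sum_congr rfl fun a ha => by rw [hhom _ (hw₁' a ha) a (hT a ha), (hW (htW ha)).2]]
      simp [Finset.sum_sub_distrib, hw₁]
    _ ≤ _ := le_map_sum_of_superadditive hconv hcone hsuper ht fun a ha =>
      hcone _ (hw₁' a ha) a (hT a ha)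
  have hsplit : ∑ a ∈ t, w a • a + ∑ a ∈ t, (1 - w a) • a = ∑ a ∈ t, a := by
    rw [← Finset.sum_add_distrib]
    exact Finset.sum_congr rfl fun a _ => by rw [← add_smul, add_sub_cancel, one_smul]
  have hxT : ∑ a ∈ t, w a • a ∈ T := hconv.sum_mem hw₀ hw₁ hT
  have hyT : ∑ a ∈ t, (1 - w a) • a ∈ T :=
    Finset.sum_induction_nonempty _ (· ∈ T) (fun _ _ => add_mem_of_convex_of_smul_mem hconv hcone)
      ht fun a ha => hcone _ (hw₁' a ha) a (hT a ha)
  have := hsuper _ hxT _ hyT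
  rw [hsplit] at this
  linarith [hsum t htW ht]

end SuperadditiveOnCone

theorem stmt_18_general (V : Type*) [NormedAddCommGroup V] [NormedSpace ℝ V]
    [FiniteDimensional ℝ V] (T : Set V) (hconv : Convex ℝ T)
    (hcone : ∀ (c : ℝ), 0 ≤ c → ∀ v ∈ T, c • v ∈ T)
    (l : V → ℝ) (hnonneg : ∀ v ∈ T, 0 ≤ l v)
    (hhom : ∀ (c : ℝ), 0 ≤ c → ∀ v ∈ T, l (c • v) = c * l v)
    (hsuper : ∀ v ∈ T, ∀ w ∈ T, l v + l w ≤ l (v + w))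
    (W : ℕ → Set V) (hW : ∀ n, W n ⊆ {v ∈ T | l v = 1})
    (δ : ℕ → ℝ) (hδpos : ∀ n, 0 < δ n)
    (hest : ∀ n (k : ℕ) (v : Fin (k + 1) → V), Function.Injective v →
      (∀ i, v i ∈ W n) → l (∑ i, v i) ≤ (k : ℝ) + 1 + δ n) :
    ∀ n, closure (convexHull ℝ (W n)) ∩ {v ∈ T | 1 + 2 * δ n ≤ l v} = ∅ := by
  intro n
  rw [eq_empty_iff_forall_notMem]
  rintro x ⟨hxC, hxT, hxl⟩
  have hsum (t : Finset V) (htW : ↑t ⊆ W n) (ht : t.Nonempty) :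
      l (∑ a ∈ t, a) ≤ t.card + δ n := by
    obtain ⟨k, hk⟩ := Nat.exists_eq_add_one_of_ne_zero ht.card_pos.ne'
    obtain ⟨v, hv, hvt, hvsum⟩ := t.exists_injective_fin_sum_eq hk
    simpa [hk, hvsum] using hest n k v hv fun i => htW (hvt i)
  have hCT : convexHull ℝ (W n) ⊆ T := convexHull_min (fun v hv => (hW n hv).1) hconv
  have hlx : l x ≤ 1 + δ n :=
    (concaveOn_of_superadditive_of_homogeneous hconv hcone hhom hsuper).le_of_mem_closure
      (convex_convexHull ℝ _) hCT (fun z hz => hnonneg z (hCT hz))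
      (fun z => le_one_add_of_mem_convexHull hconv hcone hhom hsuper (hW n) hsum) hxC hxT
  linarith [hδpos n]

theorem stmt_18 (V : Type*) [NormedAddCommGroup V] [NormedSpace ℝ V]
    [FiniteDimensional ℝ V] (T : Set V) (hconv : Convex ℝ T)
    (hcone : ∀ (c : ℝ), 0 ≤ c → ∀ v ∈ T, c • v ∈ T)
    (l : V → ℝ) (hnonneg : ∀ v ∈ T, 0 ≤ l v)
    (hhom : ∀ (c : ℝ), 0 ≤ c → ∀ v ∈ T, l (c • v) = c * l v)
    (hsuper : ∀ v ∈ T, ∀ w ∈ T, l v + l w ≤ l (v + w))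
    (W : ℕ → Set V) (hW : ∀ n, W n ⊆ {v ∈ T | l v = 1})
    (R : ℝ) (hbdd : ∀ n, W n ⊆ Metric.closedBall 0 R)
    (hnest : ∀ n, W (n + 1) ⊆
      {v : V | ∃ c : ℝ, 0 ≤ c ∧ ∃ x ∈ convexHull ℝ (W n), v = c • x})
    (δ : ℕ → ℝ) (hδpos : ∀ n, 0 < δ n) (hδanti : Antitone δ)
    (hδ0 : Filter.Tendsto δ Filter.atTop (nhds 0))
    (hest : ∀ n (k : ℕ) (v : Fin (k + 1) → V), Function.Injective v →
      (∀ i, v i ∈ W n) → l (∑ i, v i) ≤ (k : ℝ) + 1 + δ n) :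
    ∀ n, closure (convexHull ℝ (W n)) ∩ {v ∈ T | 1 + 2 * δ n ≤ l v} = ∅ :=
  stmt_18_general V T hconv hcone l hnonneg hhom hsuper W hW δ hδpos hest
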